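/- Let X be a resolving subcategory of the extriangulated category K^{[-1,0]}(proj Λ). Then β(X) = { X ∈ X : for every conflation X ↣ X' ↠ X'' with X' ∈ X, also X'' ∈ X } is closed under direct summands. -/

import Mathlib

/-! **Statement 8.**  `K^{[-1,0]}(proj Λ)` is realized concretely as the full subcategory of
the homotopy category of cochain complexes of `Λ`-modules consisting of objects isomorphic to
complexes of finitely generated projective modules concentrated in degrees `-1, 0`; its
conflations are the distinguished triangles all of whose terms lie in this subcategory. -/

open CategoryTheory Limits Pretriangulated

namespace Stmt8

universe u
variable (Λ : Type u) [Ring Λ]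

/-- The homotopy category of cochain complexes of `Λ`-modules. -/
abbrev HtpyCat := HomotopyCategory (ModuleCat.{u} Λ) (ComplexShape.up ℤ)

/-- The subcategory `K^{[-1,0]}(proj Λ)`. -/
def KLam : Set (HtpyCat Λ) :=
  {X | ∃ C : CochainComplex (ModuleCat.{u} Λ) ℤ,
    (∀ i : ℤ, i ≠ -1 → i ≠ 0 → IsZero (C.X i)) ∧
    Module.Projective Λ (C.X (-1)) ∧ Module.Projective Λ (C.X 0) ∧
    Module.Finite Λ (C.X (-1)) ∧ Module.Finite Λ (C.X 0) ∧
    Nonempty (X ≅ (HomotopyCategory.quotient _ _).obj C)}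

/-- Conflations of `K^{[-1,0]}(proj Λ)`. -/
def IsConflation {X Y Z : HtpyCat Λ} (f : X ⟶ Y) (g : Y ⟶ Z) : Prop :=
  X ∈ KLam Λ ∧ Y ∈ KLam Λ ∧ Z ∈ KLam Λ ∧
    ∃ h : Z ⟶ X⟦(1 : ℤ)⟧, Triangle.mk f g h ∈ distTriang (HtpyCat Λ)

/-- `Z` is a direct sum of `A` and `B`. -/
def IsBiprodDecomp (Z A B : HtpyCat Λ) : Prop :=
  ∃ (iA : A ⟶ Z) (iB : B ⟶ Z) (pA : Z ⟶ A) (pB : Z ⟶ B),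
    iA ≫ pA = 𝟙 A ∧ iB ≫ pB = 𝟙 B ∧ iA ≫ pB = 0 ∧ iB ≫ pA = 0 ∧
      pA ≫ iA + pB ≫ iB = 𝟙 Z

/-- `X` is a resolving subcategory of `K^{[-1,0]}(proj Λ)`: it is closed under extensions,
cocones and direct summands, and every object of `K` is the cone of a conflation with middle
term in `X` (equivalently, `X` contains all projective objects). -/
def Resolving (X : Set (HtpyCat Λ)) : Prop :=
  X ⊆ KLam Λ ∧
  (∀ Z ∈ KLam Λ, ∃ (A B : HtpyCat Λ) (f : A ⟶ B) (g : B ⟶ Z),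
    A ∈ KLam Λ ∧ B ∈ X ∧ IsConflation Λ f g) ∧
  (∀ ⦃A B C : HtpyCat Λ⦄ (f : A ⟶ B) (g : B ⟶ C),
    IsConflation Λ f g → A ∈ X → C ∈ X → B ∈ X) ∧
  (∀ ⦃A B C : HtpyCat Λ⦄ (f : A ⟶ B) (g : B ⟶ C),
    IsConflation Λ f g → B ∈ X → C ∈ X → A ∈ X) ∧
  (∀ Z A B : HtpyCat Λ, IsBiprodDecomp Λ Z A B → Z ∈ X → A ∈ X)

/-- `β(X) = { X ∈ X : every conflation X ↣ X' ↠ X'' with X' ∈ X has X'' ∈ X }`. -/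
def beta (X : Set (HtpyCat Λ)) : Set (HtpyCat Λ) :=
  {A | A ∈ X ∧ ∀ ⦃B C : HtpyCat Λ⦄ (f : A ⟶ B) (g : B ⟶ C),
    IsConflation Λ f g → B ∈ X → C ∈ X}

/-!
If `Z = A ⊕ B` lies in `β(X)` and `A ↣ B' ↠ C` is a conflation with `B' ∈ X`, adding the split
conflation `B ↣ B ↠ 0` to it gives a conflation `Z ↣ B' ⊕ B ↠ C`. Its middle term lies in `X`
as an extension of `B` by `B'` (and `B ∈ X` as a summand of `Z`), so `C ∈ X`. The triangulated
input is that the cone of `f ⊕ 𝟙_B` is the cone of `f`.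
-/

lemma isIso_of_isIso_comp_of_isIso_comp {C : Type*} [Category* C] {X Y : C} {a : X ⟶ Y}
    {b : Y ⟶ X} (hab : IsIso (a ≫ b)) (hba : IsIso (b ≫ a)) : IsIso a :=
  have : Mono a := mono_of_mono a b
  have : IsSplitEpi a := ⟨⟨⟨inv (b ≫ a) ≫ b, by simp⟩⟩⟩
  isIso_of_mono_of_isSplitEpi a

section Pretriangulated

variable {C : Type*} [Category* C] [Preadditive C] [HasZeroObject C] [HasShift C ℤ]
  [∀ n : ℤ, (shiftFunctor C n).Additive] [Pretriangulated C]

lemma distinguished_mk_iso_hom_comp {X X' Y Z : C} {u : X ⟶ Y} {v : Y ⟶ Z}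
    {w : Z ⟶ X⟦(1 : ℤ)⟧} (hT : Triangle.mk u v w ∈ distTriang C) (e : X' ≅ X) :
    Triangle.mk (e.hom ≫ u) v (w ≫ e.inv⟦(1 : ℤ)⟧') ∈ distTriang C :=
  isomorphic_distinguished _ hT _ <| Triangle.isoMk _ _ e (Iso.refl _) (Iso.refl _)
    (by simp [Triangle.mk]) (by simp [Triangle.mk]) (by simp [Triangle.mk, ← Functor.map_comp])

lemma distinguished_mk_comp_iso_hom {X Y Z Z' : C} {u : X ⟶ Y} {v : Y ⟶ Z}
    {w : Z ⟶ X⟦(1 : ℤ)⟧} (hT : Triangle.mk u v w ∈ distTriang C) (e : Z ≅ Z') :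
    Triangle.mk u (v ≫ e.hom) (e.inv ≫ w) ∈ distTriang C :=
  isomorphic_distinguished _ hT _ <| Triangle.isoMk _ _ (Iso.refl _) (Iso.refl _) e.symm
    (by simp [Triangle.mk]) (by simp [Triangle.mk]) (by simp [Triangle.mk])

lemma exists_distinguished_biprod_map_id {A₁ A₂ A₃ : C} (B : C) {f : A₁ ⟶ A₂} {g : A₂ ⟶ A₃}
    {h : A₃ ⟶ A₁⟦(1 : ℤ)⟧} (hT : Triangle.mk f g h ∈ distTriang C) :
    ∃ (g' : A₂ ⊞ B ⟶ A₃) (h' : A₃ ⟶ (A₁ ⊞ B)⟦(1 : ℤ)⟧),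
      Triangle.mk (biprod.map f (𝟙 B)) g' h' ∈ distTriang C := by
  obtain ⟨Y, g', h', hT'⟩ := distinguished_cocone_triangle (biprod.map f (𝟙 B))
  let ψ := completeDistinguishedTriangleMorphism _ _ hT' hT biprod.fst biprod.fst
    (biprod.map_fst _ _)
  let φ := completeDistinguishedTriangleMorphism _ _ hT hT' biprod.inl biprod.inl
    (biprod.inl_map _ _).symm
  let ψB := completeDistinguishedTriangleMorphism _ _ hT' (contractible_distinguished B)
    biprod.snd biprod.snd (biprod.map_snd _ _)
  let φB := completeDistinguishedTriangleMorphism _ _ (contractible_distinguished B) hT'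
    biprod.inr biprod.inr (biprod.inr_map _ _).symm
  -- `φ ≫ ψ` and `ψ ≫ φ + ψB ≫ φB` are the identity on the first two objects, so their third
  -- components are isomorphisms; on cones, `ψB ≫ φB` passes through the cone `0` of `𝟙 B`.
  have hφψ₁ : (φ ≫ ψ).hom₁ = 𝟙 _ := biprod.inl_fst
  have hφψ₂ : (φ ≫ ψ).hom₂ = 𝟙 _ := biprod.inl_fst
  have hφψ : IsIso (φ.hom₃ ≫ ψ.hom₃) := isIso₃_of_isIso₁₂ (φ ≫ ψ) hT hT
    (by rw [hφψ₁]; infer_instance) (by rw [hφψ₂]; infer_instance)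
  have hψφ₁ : (ψ ≫ φ + ψB ≫ φB).hom₁ = 𝟙 _ := biprod.total
  have hψφ₂ : (ψ ≫ φ + ψB ≫ φB).hom₂ = 𝟙 _ := biprod.total
  have hψφB : ψB.hom₃ ≫ φB.hom₃ = 0 := by
    have hzero : IsZero (contractibleTriangle B).obj₃ := isZero_zero C
    rw [hzero.eq_of_tgt ψB.hom₃ 0, zero_comp]
  have hψφ : IsIso (ψ.hom₃ ≫ φ.hom₃) := by
    have := isIso₃_of_isIso₁₂ (ψ ≫ φ + ψB ≫ φB) hT' hT'
      (by rw [hψφ₁]; infer_instance) (by rw [hψφ₂]; infer_instance)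
    simpa [hψφB] using this
  have hψ : IsIso ψ.hom₃ := isIso_of_isIso_comp_of_isIso_comp hψφ hφψ
  obtain ⟨e⟩ : Nonempty (Y ≅ A₃) := ⟨@asIso _ _ _ _ ψ.hom₃ hψ⟩
  exact ⟨g' ≫ e.hom, e.inv ≫ h', distinguished_mk_comp_iso_hom hT' e⟩

end Pretriangulated

lemma IsBiprodDecomp.symm {Z A B : HtpyCat Λ} (h : IsBiprodDecomp Λ Z A B) :
    IsBiprodDecomp Λ Z B A := by
  obtain ⟨iA, iB, pA, pB, hA, hB, hAB, hBA, htotal⟩ := h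
  exact ⟨iB, iA, pB, pA, hB, hA, hBA, hAB, by rw [add_comm, htotal]⟩

lemma IsBiprodDecomp.nonempty_iso_biprod {Z A B : HtpyCat Λ} (h : IsBiprodDecomp Λ Z A B) :
    Nonempty (Z ≅ A ⊞ B) := by
  obtain ⟨iA, iB, pA, pB, hA, hB, hAB, hBA, htotal⟩ := h
  let b : BinaryBicone A B := ⟨Z, pA, pB, iA, iB, hA, hAB, hBA, hB⟩
  exact ⟨biprod.uniqueUpToIso A B (isBinaryBilimitOfTotal b htotal)⟩

noncomputable def biprodXLinearEquiv (C₁ C₂ : CochainComplex (ModuleCat.{u} Λ) ℤ) (i : ℤ) :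
    (C₁ ⊞ C₂).X i ≃ₗ[Λ] C₁.X i × C₂.X i :=
  ((HomologicalComplex.eval _ _ i).mapBiprod C₁ C₂ ≪≫ ModuleCat.biprodIsoProd _ _).toLinearEquiv

lemma biprod_mem_KLam {A B : HtpyCat Λ} (hA : A ∈ KLam Λ) (hB : B ∈ KLam Λ) :
    (A ⊞ B : HtpyCat Λ) ∈ KLam Λ := by
  obtain ⟨C₁, hz₁, hp₁, hp₁', hf₁, hf₁', ⟨e₁⟩⟩ := hA
  obtain ⟨C₂, hz₂, hp₂, hp₂', hf₂, hf₂', ⟨e₂⟩⟩ := hB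
  refine ⟨C₁ ⊞ C₂, fun i h₁ h₀ => ?_, .of_equiv (biprodXLinearEquiv Λ C₁ C₂ (-1)).symm,
    .of_equiv (biprodXLinearEquiv Λ C₁ C₂ 0).symm, .equiv (biprodXLinearEquiv Λ C₁ C₂ (-1)).symm,
    .equiv (biprodXLinearEquiv Λ C₁ C₂ 0).symm, ?_⟩
  · exact ((HomologicalComplex.eval _ _ i).mapBiprod C₁ C₂).isZero_iff.2
      ((biprod_isZero_iff _ _).2 ⟨hz₁ i h₁ h₀, hz₂ i h₁ h₀⟩)
  · have := preservesBinaryBiproduct_of_preservesBiproduct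
      (HomotopyCategory.quotient (ModuleCat.{u} Λ) (ComplexShape.up ℤ)) C₁ C₂
    exact ⟨biprod.mapIso e₁ e₂ ≪≫ ((HomotopyCategory.quotient _ _).mapBiprod C₁ C₂).symm⟩

theorem stmt8 (X : Set (HtpyCat Λ)) (hX : Resolving Λ X) :
    ∀ Z ∈ beta Λ X, ∀ A B : HtpyCat Λ, IsBiprodDecomp Λ Z A B → A ∈ beta Λ X := by
  rintro Z ⟨hZX, hZβ⟩ A B hZAB
  obtain ⟨hXK, -, hext, -, hsummand⟩ := hX
  have hBX : B ∈ X := hsummand Z B A hZAB.symm hZX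
  refine ⟨hsummand Z A B hZAB hZX, fun B' C f g ⟨_, hB'K, hCK, _, hT⟩ hB'X => ?_⟩
  obtain ⟨e⟩ := hZAB.nonempty_iso_biprod
  obtain ⟨g', h', hT'⟩ := exists_distinguished_biprod_map_id B hT
  have hEK : (B' ⊞ B : HtpyCat Λ) ∈ KLam Λ := biprod_mem_KLam Λ hB'K (hXK hBX)
  have hEX : (B' ⊞ B : HtpyCat Λ) ∈ X := hext biprod.inl biprod.snd
    ⟨hB'K, hEK, hXK hBX, 0, binaryBiproductTriangle_distinguished B' B⟩ hB'X hBX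
  exact hZβ (e.hom ≫ biprod.map f (𝟙 B)) g'
    ⟨hXK hZX, hEK, hCK, _, distinguished_mk_iso_hom_comp hT' e⟩ hEX

end Stmt8
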